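/- Let Λ ⊆ ℝ^d be a repetitive Delone set of finite local complexity, let V : ℝ^d → ℝ be a bounded C³ Λ-equivariant non-degenerate function, and let (𝒮, (H_B)) be an interaction satisfying condition (H2). Then for every linear map L : ℝ^r → ℝ^d and every R > 0 there exist λ₀ > 0 and ε > 0 such that for every λ > λ₀ and every map a : ℤ^r → ℝ^d with a i ∈ Z_V and ‖a i - L i‖ ≤ R for all i ∈ ℤ^r, there exists a unique configuration u : ℤ^r → ℝ^d with sup_{i ∈ ℤ^r} ‖u i - a i‖ ≤ ε satisfying the equilibrium equations Q_i(u) + λ ∇V(u i) = 0 for all i ∈ ℤ^r; moreover this u is of type σ, i.e. sup_{i ∈ ℤ^r} ‖u i - L i‖ < ∞. -/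

import Mathlib

open Metric Set

noncomputable section

abbrev Euc (d : ℕ) : Type := EuclideanSpace ℝ (Fin d)

/-- The translate `Λ - y` of a point set. -/
def translateSet {d : ℕ} (Λ : Set (Euc d)) (y : Euc d) : Set (Euc d) :=
  (fun x => x - y) '' Λ

/-- A Delone set: uniformly discrete and relatively dense. -/
def IsDeloneSet {d : ℕ} (Λ : Set (Euc d)) : Prop :=
  (∃ r > 0, ∀ x ∈ Λ, ∀ y ∈ Λ, x ≠ y → r ≤ dist x y) ∧
  (∃ R > 0, ∀ y : Euc d, ∃ x ∈ Λ, x ∈ closedBall y R)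

/-- Finite local complexity. -/
def HasFLC {d : ℕ} (Λ : Set (Euc d)) : Prop :=
  ∀ R > 0, {s : Set (Euc d) | ∃ y : Euc d, s = translateSet Λ y ∩ closedBall 0 R}.Finite

/-- Repetitivity. -/
def IsRepetitive {d : ℕ} (Λ : Set (Euc d)) : Prop :=
  ∀ C : Set (Euc d), C ⊆ Λ → C.Finite →
    ∃ R > 0, ∀ y : Euc d, ∃ t : Euc d,
      (fun x => x + t) '' C ⊆ Λ ∧ (fun x => x + t) '' C ⊆ closedBall y R

/-- Λ-equivariant (pattern-equivariant) function. -/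
def IsPatternEquivariant {d : ℕ} (Λ : Set (Euc d)) (f : Euc d → ℝ) : Prop :=
  Continuous f ∧ ∃ R₀ > 0, ∀ x y : Euc d,
    translateSet Λ x ∩ closedBall 0 R₀ = translateSet Λ y ∩ closedBall 0 R₀ → f x = f y

/-- The Hessian of `V` at `x`, as the derivative of the gradient. -/
def Hess {d : ℕ} (V : Euc d → ℝ) (x : Euc d) : Euc d →L[ℝ] Euc d :=
  fderiv ℝ (gradient V) x

/-- The set of non-degenerate critical points of `V`. -/
def ZSet {d : ℕ} (V : Euc d → ℝ) : Set (Euc d) :=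
  {x | gradient V x = 0 ∧ IsUnit (Hess V x)}

/-- Non-degenerate potential: some point has vanishing gradient and invertible Hessian. -/
def NonDegeneratePotential {d : ℕ} (V : Euc d → ℝ) : Prop :=
  ∃ z : Euc d, gradient V z = 0 ∧ IsUnit (Hess V z)

/-- Bounded and C³. -/
def BoundedC3 {d : ℕ} (V : Euc d → ℝ) : Prop :=
  ContDiff ℝ 3 V ∧ ∃ M : ℝ, ∀ x, |V x| ≤ M

/-- Relatively dense subset of ℝ^d. -/
def RelativelyDense {d : ℕ} (S : Set (Euc d)) : Prop :=
  ∃ R > 0, ∀ y : Euc d, ∃ x ∈ S, x ∈ closedBall y R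

/-- An expanding linear automorphism with constant μ. -/
def Expanding {d : ℕ} (A : Euc d ≃L[ℝ] Euc d) (μ : ℝ) : Prop :=
  1 < μ ∧ ∀ x : Euc d, μ * ‖x‖ ≤ ‖A x‖

abbrev ZLat (r : ℕ) : Type := Fin r → ℤ

/-- The canonical embedding ℤ^r → ℝ^r. -/
def latCast {r : ℕ} (i : ZLat r) : EuclideanSpace ℝ (Fin r) :=
  WithLp.toLp 2 (fun k => (i k : ℝ))

abbrev Config (r d : ℕ) : Type := ZLat r → Euc d

/-- A configuration is of type σ(R) for the linear map L. -/
def OfTypeR {r d : ℕ} (L : EuclideanSpace ℝ (Fin r) →ₗ[ℝ] Euc d) (R : ℝ)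
    (u : Config r d) : Prop :=
  ∀ i : ZLat r, ‖u i - L (latCast i)‖ ≤ R

/-- An interaction: a collection of finite subsets of ℤ^r of cardinality ≥ 2, each index
lying in only finitely many of them, together with local functions H_B. -/
structure Interaction (r d : ℕ) where
  S : Set (Finset (ZLat r))
  card_ge : ∀ B ∈ S, 2 ≤ B.card
  locFin : ∀ i : ZLat r, {B | B ∈ S ∧ i ∈ B}.Finite
  H : Finset (ZLat r) → Config r d → ℝ
  local_dep : ∀ B ∈ S, ∀ u v : Config r d, (∀ j ∈ B, u j = v j) → H B u = H B v

namespace Interaction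

variable {r d : ℕ} (I : Interaction r d)

/-- The finite collection of interaction sets containing `i`. -/
def Si (i : ZLat r) : Finset (Finset (ZLat r)) := (I.locFin i).toFinset

/-- F_i(u) = Σ_{B ∈ 𝒮, i ∈ B} H_B(u). -/
def F (i : ZLat r) (u : Config r d) : ℝ := ∑ B ∈ I.Si i, I.H B u

/-- Q_i(u): the gradient of F_i with respect to the variable u_i. -/
def Q (i : ZLat r) (u : Config r d) : Euc d :=
  gradient (fun x => I.F i (Function.update u i x)) (u i)

/-- The finite set of indices that F_i depends on. -/
def J (i : ZLat r) : Finset (ZLat r) := (I.Si i).biUnion id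

/-- Patch a configuration using local data on `J i`. -/
def patch (i : ZLat r) (u : Config r d) (w : {j // j ∈ I.J i} → Euc d) : Config r d :=
  fun j => if h : j ∈ I.J i then w ⟨j, h⟩ else u j

/-- Restriction of a configuration to the finitely many variables `J i`. -/
def restr (i : ZLat r) (u : Config r d) : {j // j ∈ I.J i} → Euc d := fun j => u j.1

/-- F_i as a function of its finitely many variables. -/
def locF (i : ZLat r) (u : Config r d) : ({j // j ∈ I.J i} → Euc d) → ℝ :=
  fun w => I.F i (I.patch i u w)

/-- The full Hessian of F_i at u, in the finitely many variables `(u_j)_{j ∈ J i}`. -/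
def HessF (i : ZLat r) (u : Config r d) :
    ({j // j ∈ I.J i} → Euc d) →L[ℝ] ({j // j ∈ I.J i} → Euc d) →L[ℝ] ℝ :=
  fderiv ℝ (fderiv ℝ (I.locF i u)) (I.restr i u)

/-- Each F_i is C² in its finitely many variables. -/
def IsC2 : Prop := ∀ (i : ZLat r) (u : Config r d), ContDiff ℝ 2 (I.locF i u)

/-- Condition (H2). -/
def SatisfiesH2 : Prop :=
  ∀ (L : EuclideanSpace ℝ (Fin r) →ₗ[ℝ] Euc d) (R : ℝ), 0 < R →
    ∃ C : ℝ, ∀ u : Config r d, OfTypeR L R u →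
      ∀ i : ZLat r, ‖I.Q i u‖ + ‖I.HessF i u‖ ≤ C

end Interaction

/-- A uniform local inverse family for ∇V over the non-degenerate zero set. -/
def UnifLocalInv {d : ℕ} (V : Euc d → ℝ) (K : Euc d → Euc d → Euc d)
    (RV KV : ℝ) : Prop :=
  0 < RV ∧ 0 < KV ∧ ∀ z ∈ ZSet V,
    ContDiffOn ℝ 1 (K z) (closedBall 0 RV) ∧
    (∀ x ∈ closedBall 0 RV, gradient V (K z x) = x) ∧
    K z 0 = z ∧
    ∀ x ∈ closedBall 0 RV, ‖fderivWithin ℝ (K z) (closedBall 0 RV) x‖ ≤ KV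

/-- The derivatives DK_z are Lipschitz with constant C, uniformly over z ∈ Z_V. -/
def LipDerivInv {d : ℕ} (V : Euc d → ℝ) (K : Euc d → Euc d → Euc d)
    (RV C : ℝ) : Prop :=
  ∀ z ∈ ZSet V, ∀ x ∈ closedBall (0 : Euc d) RV, ∀ x' ∈ closedBall (0 : Euc d) RV,
    ‖fderivWithin ℝ (K z) (closedBall 0 RV) x - fderivWithin ℝ (K z) (closedBall 0 RV) x'‖
      ≤ C * ‖x - x'‖

/-!
Because Λ has finite local complexity and `V` is Λ-equivariant, `V` looks the same near any point
of `Z_V` as near one of finitely many representatives. Hence the inverse Hessians `(D²V z)⁻¹`,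
`z ∈ Z_V`, are uniformly bounded and `D²V` is equicontinuous at the points of `Z_V`, so that
`x ↦ x - (D²V z)⁻¹ ∇V x` is a `1/2`-contraction on a ball of a uniform radius `ε` around each
`z ∈ Z_V`. Dividing the equilibrium equations by `λ`, their solutions near `a` are the fixed points
of `u ↦ (u i - (D²V (a i))⁻¹ (λ⁻¹ Q_i u + ∇V (u i)))_i`. By (H2) the forces `Q_i` are bounded and
uniformly Lipschitz on configurations of type `σ(R + ε)`, so for large `λ` this map contracts the
`ε`-ball around `a` in `ℓ^∞`, and the Banach fixed-point theorem applies.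
-/

open Filter Topology

lemma mem_translateSet {d : ℕ} {Λ : Set (Euc d)} {y q : Euc d} :
    q ∈ translateSet Λ y ↔ q + y ∈ Λ := by
  constructor
  · rintro ⟨p, hp, rfl⟩
    simpa using hp
  · exact fun h => ⟨q + y, h, add_sub_cancel_right q y⟩

lemma translateSet_add_inter_closedBall_eq {d : ℕ} {Λ : Set (Euc d)} {R₀ ρ : ℝ}
    {z z' x : Euc d}
    (h : translateSet Λ z ∩ closedBall 0 (R₀ + ρ) = translateSet Λ z' ∩ closedBall 0 (R₀ + ρ))
    (hx : ‖x‖ ≤ ρ) :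
    translateSet Λ (z + x) ∩ closedBall 0 R₀ = translateSet Λ (z' + x) ∩ closedBall 0 R₀ := by
  ext q
  simp only [mem_inter_iff, mem_translateSet, mem_closedBall_zero_iff]
  refine and_congr_left fun hq => ?_
  have hqx : ‖q + x‖ ≤ R₀ + ρ := (norm_add_le _ _).trans (add_le_add hq hx)
  have := Set.ext_iff.1 h (q + x)
  simp only [mem_inter_iff, mem_translateSet, mem_closedBall_zero_iff, hqx, and_true] at this
  simpa only [add_assoc, add_comm x] using this

lemma IsPatternEquivariant.exists_finite_local_representatives {d : ℕ} {Λ : Set (Euc d)}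
    {V : Euc d → ℝ} (hV : IsPatternEquivariant Λ V) (hFLC : HasFLC Λ) (S : Set (Euc d))
    {ρ : ℝ} (hρ : 0 ≤ ρ) :
    ∃ T ⊆ S, T.Finite ∧ ∀ z ∈ S, ∃ z' ∈ T, ∀ x, ‖x‖ ≤ ρ → V (z + x) = V (z' + x) := by
  obtain ⟨-, R₀, hR₀, hV⟩ := hV
  set patch : Euc d → Set (Euc d) := fun y => translateSet Λ y ∩ closedBall 0 (R₀ + ρ)
  obtain ⟨T, hTS, hT⟩ := exists_subset_bijOn S patch
  have hfin : (patch '' S).Finite :=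
    (hFLC (R₀ + ρ) (by positivity)).subset (by rintro _ ⟨y, -, rfl⟩; exact ⟨y, rfl⟩)
  refine ⟨T, hTS, Finite.of_finite_image (hT.image_eq ▸ hfin) hT.injOn, fun z hz => ?_⟩
  obtain ⟨z', hz'T, hpz⟩ := hT.surjOn (mem_image_of_mem patch hz)
  exact ⟨z', hz'T, fun x hx => hV _ _ (translateSet_add_inter_closedBall_eq hpz.symm hx)⟩

lemma ContDiff.gradient {E : Type*} [NormedAddCommGroup E] [InnerProductSpace ℝ E]
    [CompleteSpace E] {f : E → ℝ} {n : WithTop ℕ∞} (hf : ContDiff ℝ (n + 1) f) :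
    ContDiff ℝ n (gradient f) :=
  (InnerProductSpace.toDual ℝ E).symm.contDiff.comp (hf.fderiv_right le_rfl)

lemma hess_add_eq_of_forall_norm_le {d : ℕ} {V : Euc d → ℝ} {z z' : Euc d} {ρ : ℝ}
    (h : ∀ x, ‖x‖ ≤ ρ → V (z + x) = V (z' + x)) {ξ : Euc d} (hξ : ‖ξ‖ < ρ) :
    Hess V (z + ξ) = Hess V (z' + ξ) := by
  have hloc : (fun x => V (z + x)) =ᶠ[𝓝 ξ] fun x => V (z' + x) :=
    eventually_of_mem (isOpen_ball.mem_nhds (mem_ball_zero_iff.2 hξ))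
      fun x hx => h x (mem_ball_zero_iff.1 hx).le
  have hgrad : (fun x => gradient V (z + x)) =ᶠ[𝓝 ξ] fun x => gradient V (z' + x) := by
    filter_upwards [hloc.fderiv (𝕜 := ℝ)] with x hx
    simp only [gradient]
    rw [← fderiv_comp_add_left (𝕜 := ℝ) z, ← fderiv_comp_add_left (𝕜 := ℝ) z', hx]
  rw [Hess, Hess, ← fderiv_comp_add_left (𝕜 := ℝ) (f := gradient V) z,
    ← fderiv_comp_add_left (𝕜 := ℝ) (f := gradient V) z', hgrad.fderiv_eq]

lemma Set.Finite.exists_pos_forall_dist_le {α β : Type*} [PseudoMetricSpace α]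
    [PseudoMetricSpace β] {f : α → β} {T : Set α} (hT : T.Finite)
    (hf : ∀ z ∈ T, ContinuousAt f z) {δ : ℝ} (hδ : 0 < δ) :
    ∃ ε > 0, ∀ z ∈ T, ∀ x, dist x z ≤ ε → dist (f x) (f z) ≤ δ := by
  choose! ε hε hball using fun z hz =>
    Metric.eventually_nhds_iff.1 ((hf z hz).eventually (Metric.ball_mem_nhds (f z) hδ))
  have hsmall : ∀ᶠ r in 𝓝 (0 : ℝ), ∀ z ∈ T, r < ε z :=
    hT.eventually_all.2 fun z hz => eventually_lt_nhds (hε z hz)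
  obtain ⟨r, hrε, hr⟩ :=
    ((hsmall.filter_mono nhdsWithin_le_nhds).and self_mem_nhdsWithin).exists (f := 𝓝[>] 0)
  exact ⟨r, hr, fun z hz x hx => (hball z hz (hx.trans_lt (hrε z hz))).le⟩

lemma norm_sub_sub_inverse_apply_sub_le {E F : Type*} [NormedAddCommGroup E] [NormedSpace ℝ E]
    [NormedAddCommGroup F] [NormedSpace ℝ F] {f : E → F} (hf : Differentiable ℝ f) {z : E}
    {B : F →L[ℝ] E} (hB : ∀ x, B (fderiv ℝ f z x) = x) {ε δ : ℝ}
    (hδ : ∀ w ∈ closedBall z ε, ‖fderiv ℝ f w - fderiv ℝ f z‖ ≤ δ) {x y : E}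
    (hx : x ∈ closedBall z ε) (hy : y ∈ closedBall z ε) :
    ‖(x - y) - B (f x - f y)‖ ≤ ‖B‖ * δ * ‖x - y‖ := by
  have hmv := (convex_closedBall z ε).norm_image_sub_le_of_norm_fderiv_le'
    (fun w _ => hf w) hδ hy hx
  have hB' : (x - y) - B (f x - f y) = -B (f x - f y - fderiv ℝ f z (x - y)) := by
    rw [map_sub B (f x - f y), hB]
    abel
  rw [hB', norm_neg, mul_assoc]
  exact B.le_opNorm_of_le hmv

lemma exists_uniform_newton_bound {d : ℕ} {Λ : Set (Euc d)} (hFLC : HasFLC Λ)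
    {V : Euc d → ℝ} (hV : ContDiff ℝ 2 V) (hVeq : IsPatternEquivariant Λ V) :
    ∃ ε > 0, ∃ c > 0, ∀ z ∈ ZSet V, ‖Ring.inverse (Hess V z)‖ ≤ c ∧
      ∀ x ∈ closedBall z ε, ∀ y ∈ closedBall z ε,
        ‖(x - y) - Ring.inverse (Hess V z) (gradient V x - gradient V y)‖ ≤ 1 / 2 * ‖x - y‖ := by
  obtain ⟨T, -, hT, hrep⟩ := hVeq.exists_finite_local_representatives hFLC (ZSet V) zero_le_one
  obtain ⟨c₀, hc₀⟩ := (hT.image fun z => ‖Ring.inverse (Hess V z)‖).bddAbove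
  set c := max c₀ 1
  have hc : 0 < c := lt_max_of_lt_right one_pos
  have hHess : Continuous (Hess V) := (hV.gradient (n := 1)).continuous_fderiv one_ne_zero
  obtain ⟨ε, hε, hcont⟩ := hT.exists_pos_forall_dist_le (fun z _ => hHess.continuousAt)
    (δ := 1 / (2 * c)) (by positivity)
  refine ⟨min ε (1 / 2), by positivity, c, hc, fun z hz => ?_⟩
  obtain ⟨z', hz'T, hzz'⟩ := hrep z hz
  have hloc : ∀ w ∈ closedBall z (min ε (1 / 2)), Hess V w = Hess V (z' + (w - z)) := by
    intro w hw
    have hw' : ‖w - z‖ < 1 := by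
      linarith [mem_closedBall_iff_norm.1 hw, min_le_right ε (1 / 2)]
    simpa using hess_add_eq_of_forall_norm_le hzz' hw'
  have hz0 : Hess V z = Hess V z' := by
    simpa using hloc z (mem_closedBall_self (by positivity))
  have hB : ∀ x, Ring.inverse (Hess V z) (Hess V z x) = x :=
    DFunLike.congr_fun (Ring.inverse_mul_cancel _ hz.2)
  have hBc : ‖Ring.inverse (Hess V z)‖ ≤ c :=
    hz0 ▸ (hc₀ (mem_image_of_mem _ hz'T)).trans (le_max_left _ _)
  have hδ : ∀ w ∈ closedBall z (min ε (1 / 2)),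
      ‖fderiv ℝ (gradient V) w - fderiv ℝ (gradient V) z‖ ≤ 1 / (2 * c) := by
    intro w hw
    rw [← Hess, ← Hess, hloc w hw, hz0, ← dist_eq_norm]
    refine hcont z' hz'T _ ?_
    rw [dist_eq_norm, add_sub_cancel_left]
    exact (mem_closedBall_iff_norm.1 hw).trans (min_le_left _ _)
  refine ⟨hBc, fun x hx y hy => ?_⟩
  calc _ ≤ ‖Ring.inverse (Hess V z)‖ * (1 / (2 * c)) * ‖x - y‖ :=
        norm_sub_sub_inverse_apply_sub_le ((hV.gradient (n := 1)).differentiable one_ne_zero)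
          hB hδ hx hy
    _ ≤ c * (1 / (2 * c)) * ‖x - y‖ := by gcongr
    _ = 1 / 2 * ‖x - y‖ := by field_simp

section Contraction

open scoped NNReal ENNReal

variable {ι E : Type*} [NormedAddCommGroup E]

theorem existsUnique_fixedPoint_of_forall_norm_sub_le [CompleteSpace E] {G : (ι → E) → ι → E}
    {a : ι → E} {ε : ℝ} (hε : 0 ≤ ε) {K : ℝ≥0} (hK : K < 1)
    (hmaps : ∀ u, (∀ i, ‖u i - a i‖ ≤ ε) → ∀ i, ‖G u i - a i‖ ≤ ε)
    (hlip : ∀ u v, (∀ i, ‖u i - a i‖ ≤ ε) → (∀ i, ‖v i - a i‖ ≤ ε) →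
      ∀ M, (∀ i, ‖u i - v i‖ ≤ M) → ∀ i, ‖G u i - G v i‖ ≤ K * M) :
    ∃! u, (∀ i, ‖u i - a i‖ ≤ ε) ∧ G u = u := by
  set X := closedBall (0 : lp (fun _ : ι => E) ∞) ε
  have : Nonempty X := ⟨⟨0, mem_closedBall_self hε⟩⟩
  have : CompleteSpace X := isClosed_closedBall.completeSpace_coe
  have hX : ∀ x : X, ∀ i, ‖x.1 i‖ ≤ ε := fun x i =>
    (lp.norm_apply_le_norm ENNReal.top_ne_zero _ i).trans (mem_closedBall_zero_iff.1 x.2)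
  let toX (w : ι → E) (hw : ∀ i, ‖w i‖ ≤ ε) : X :=
    ⟨⟨w, memℓp_infty_iff.2 ⟨ε, by rintro _ ⟨i, rfl⟩; exact hw i⟩⟩,
      mem_closedBall_zero_iff.2 (lp.norm_le_of_forall_le hε hw)⟩
  have hnear : ∀ x : X, ∀ i, ‖(a + ⇑x.1) i - a i‖ ≤ ε := fun x i => by
    simpa using hX x i
  let Φ : X → X := fun x => toX (G (a + ⇑x.1) - a) (hmaps _ (hnear x))
  have hΦ : ContractingWith K Φ := by
    refine ⟨hK, LipschitzWith.of_dist_le_mul fun x y => ?_⟩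
    rw [Subtype.dist_eq, Subtype.dist_eq, dist_eq_norm, dist_eq_norm]
    refine lp.norm_le_of_forall_le (by positivity) fun i => ?_
    have hxy : ∀ j, ‖(a + ⇑x.1) j - (a + ⇑y.1) j‖ ≤ ‖x.1 - y.1‖ :=
      fun j => by simpa using lp.norm_apply_le_norm ENNReal.top_ne_zero (x.1 - y.1) j
    rw [lp.coeFn_sub, Pi.sub_apply]
    exact (congrArg norm (sub_sub_sub_cancel_right _ _ (a i))).trans_le
      (hlip _ _ (hnear x) (hnear y) _ hxy i)
  have hfix : ∀ x : X, Φ x = x ↔ G (a + ⇑x.1) = a + ⇑x.1 := fun x => by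
    rw [Subtype.ext_iff, ← sub_eq_iff_eq_add']
    exact ⟨fun h => congrArg Subtype.val h, fun h => lp.ext h⟩
  refine ⟨a + ⇑(ContractingWith.fixedPoint Φ hΦ).1,
    ⟨hnear _, (hfix _).1 hΦ.fixedPoint_isFixedPt⟩, ?_⟩
  rintro u ⟨hu, hGu⟩
  have hx := hΦ.fixedPoint_unique (x := toX (u - a) hu) ((hfix _).2 (by simpa [toX] using hGu))
  rw [← hx]
  simp [toX]

lemma norm_newton_step_sub_le [NormedSpace ℝ E] {g : E → E} {B : E →L[ℝ] E} {a : E}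
    {ε c t : ℝ} (hBc : ‖B‖ ≤ c) (ht : 0 ≤ t)
    (hnewton : ∀ x ∈ closedBall a ε, ∀ y ∈ closedBall a ε,
      ‖(x - y) - B (g x - g y)‖ ≤ 1 / 2 * ‖x - y‖)
    {x y : E} (hx : x ∈ closedBall a ε) (hy : y ∈ closedBall a ε) (q q' : E) :
    ‖(x - B (t • q + g x)) - (y - B (t • q' + g y))‖ ≤ 1 / 2 * ‖x - y‖ + t * c * ‖q - q'‖ := by
  have hsplit : (x - B (t • q + g x)) - (y - B (t • q' + g y)) =
      ((x - y) - B (g x - g y)) - t • B (q - q') := by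
    simp only [map_add, map_smul, map_sub, smul_sub]
    abel
  have hq : ‖t • B (q - q')‖ ≤ t * c * ‖q - q'‖ := by
    rw [norm_smul, Real.norm_of_nonneg ht, mul_assoc]
    gcongr
    exact B.le_of_opNorm_le hBc _
  rw [hsplit]
  exact (norm_sub_le _ _).trans (add_le_add (hnewton x hx y hy) hq)

theorem existsUnique_add_smul_eq_zero [NormedSpace ℝ E] [CompleteSpace E] {g : E → E}
    {Q : ι → (ι → E) → E} {a : ι → E} {B : ι → E →L[ℝ] E} {ε c C lam : ℝ} (hε : 0 ≤ ε)
    (hlam : 0 < lam) (hB : ∀ i, Function.Injective (B i)) (hBc : ∀ i, ‖B i‖ ≤ c)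
    (hga : ∀ i, g (a i) = 0)
    (hnewton : ∀ i, ∀ x ∈ closedBall (a i) ε, ∀ y ∈ closedBall (a i) ε,
      ‖(x - y) - B i (g x - g y)‖ ≤ 1 / 2 * ‖x - y‖)
    (hQ : ∀ u, (∀ j, ‖u j - a j‖ ≤ ε) → ∀ i, ‖Q i u‖ ≤ C)
    (hQlip : ∀ u v, (∀ j, ‖u j - a j‖ ≤ ε) → (∀ j, ‖v j - a j‖ ≤ ε) →
      ∀ M, (∀ j, ‖u j - v j‖ ≤ M) → ∀ i, ‖Q i u - Q i v‖ ≤ C * M)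
    (hlam₁ : 2 * c * C ≤ lam * ε) (hlam₂ : 4 * c * C ≤ lam) :
    ∃! u : ι → E, (∀ i, ‖u i - a i‖ ≤ ε) ∧ ∀ i, Q i u + lam • g (u i) = 0 := by
  set G : (ι → E) → ι → E := fun u i => u i - B i (lam⁻¹ • Q i u + g (u i))
  have hfix : ∀ u, G u = u ↔ ∀ i, Q i u + lam • g (u i) = 0 := fun u => by
    simp only [funext_iff, G, sub_eq_self, map_eq_zero_iff _ (hB _)]
    refine forall_congr' fun i => ?_
    rw [← smul_right_inj hlam.ne', smul_zero, smul_add, smul_smul, mul_inv_cancel₀ hlam.ne',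
      one_smul]
  have hcC₁ : lam⁻¹ * c * C ≤ ε / 2 := by
    rw [mul_assoc, inv_mul_le_iff₀ hlam]
    linarith
  have hcC₂ : lam⁻¹ * c * C ≤ 1 / 4 := by
    rw [mul_assoc, inv_mul_le_iff₀ hlam]
    linarith
  have hmaps : ∀ u, (∀ i, ‖u i - a i‖ ≤ ε) → ∀ i, ‖G u i - a i‖ ≤ ε := fun u hu i => by
    have hc : 0 ≤ c := (norm_nonneg _).trans (hBc i)
    have h := norm_newton_step_sub_le (hBc i) (inv_nonneg.2 hlam.le) (hnewton i)
      (mem_closedBall_iff_norm.2 (hu i)) (mem_closedBall_self hε) (Q i u) 0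
    simp only [smul_zero, zero_add, hga, map_zero, sub_zero] at h
    calc ‖G u i - a i‖ ≤ 1 / 2 * ‖u i - a i‖ + lam⁻¹ * c * ‖Q i u‖ := h
      _ ≤ 1 / 2 * ε + lam⁻¹ * c * C := by gcongr; exacts [hu i, hQ u hu i]
      _ ≤ ε := by linarith
  have hlip : ∀ u v, (∀ i, ‖u i - a i‖ ≤ ε) → (∀ i, ‖v i - a i‖ ≤ ε) →
      ∀ M, (∀ i, ‖u i - v i‖ ≤ M) → ∀ i, ‖G u i - G v i‖ ≤ (3 / 4 : NNReal) * M := by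
    intro u v hu hv M hM i
    have hc : 0 ≤ c := (norm_nonneg _).trans (hBc i)
    have hM0 : 0 ≤ M := (norm_nonneg _).trans (hM i)
    calc ‖G u i - G v i‖ ≤ 1 / 2 * ‖u i - v i‖ + lam⁻¹ * c * ‖Q i u - Q i v‖ :=
          norm_newton_step_sub_le (hBc i) (inv_nonneg.2 hlam.le) (hnewton i)
            (mem_closedBall_iff_norm.2 (hu i)) (mem_closedBall_iff_norm.2 (hv i)) _ _
      _ ≤ 1 / 2 * M + lam⁻¹ * c * (C * M) := by gcongr; exacts [hM i, hQlip u v hu hv M hM i]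
      _ ≤ (3 / 4 : NNReal) * M := by
          push_cast
          nlinarith
  simpa only [hfix] using existsUnique_fixedPoint_of_forall_norm_sub_le hε
    (by norm_num) hmaps hlip

end Contraction

lemma ContinuousLinearMap.norm_pi_single_id_le {ι F : Type*} [Fintype ι] [DecidableEq ι]
    [NormedAddCommGroup F] [NormedSpace ℝ F] (k : ι) :
    ‖(ContinuousLinearMap.pi (Pi.single k (.id ℝ F)) : F →L[ℝ] ι → F)‖ ≤ 1 :=
  opNorm_le_bound _ zero_le_one fun x => by
    have hx : ContinuousLinearMap.pi (Pi.single k (.id ℝ F)) x = (Pi.single k x : ι → F) := by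
      ext j
      by_cases h : j = k
      · subst h
        simp
      · simp [h]
    rw [hx, Pi.norm_single, one_mul]

namespace Interaction

variable {r d : ℕ} (I : Interaction r d)

lemma F_congr {i : ZLat r} {u v : Config r d} (h : ∀ j ∈ I.J i, u j = v j) :
    I.F i u = I.F i v :=
  Finset.sum_congr rfl fun B hB =>
    I.local_dep B ((I.locFin i).mem_toFinset.1 hB).1 u v
      fun j hj => h j (Finset.mem_biUnion.2 ⟨B, hB, hj⟩)

lemma locF_eq (i : ZLat r) (u v : Config r d) : I.locF i u = I.locF i v :=
  funext fun w => I.F_congr fun j hj => by simp [patch, hj]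

lemma restr_patch (i : ZLat r) (u : Config r d) (w : {j // j ∈ I.J i} → Euc d) :
    I.restr i (I.patch i u w) = w :=
  funext fun j => by simp [restr, patch, j.2]

lemma HessF_patch (i : ZLat r) (u : Config r d) (w : {j // j ∈ I.J i} → Euc d) :
    I.HessF i (I.patch i u w) = fderiv ℝ (fderiv ℝ (I.locF i u)) w := by
  rw [HessF, I.locF_eq i _ u, I.restr_patch]

lemma patch_update_restr {i : ZLat r} (hi : i ∈ I.J i) (u : Config r d) (x : Euc d) :
    I.patch i u (Function.update (I.restr i u) ⟨i, hi⟩ x) = Function.update u i x := by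
  funext j
  by_cases hj : j ∈ I.J i
  · by_cases hji : j = i
    · subst hji
      simp [patch, hi]
    · simp [patch, restr, hj, hji]
  · have hji : j ≠ i := fun h => hj (h ▸ hi)
    simp [patch, hj, hji]

lemma Q_eq_zero_of_not_mem {i : ZLat r} (hi : i ∉ I.J i) (u : Config r d) : I.Q i u = 0 := by
  have hconst : (fun x => I.F i (Function.update u i x)) = fun _ => I.F i u :=
    funext fun x => I.F_congr fun j hj =>
      Function.update_of_ne (ne_of_mem_of_not_mem hj hi) _ _
  rw [Q, hconst, gradient_fun_const]

lemma Q_eq_of_mem {i : ZLat r} (hi : i ∈ I.J i) {u : Config r d}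
    (hu : DifferentiableAt ℝ (I.locF i u) (I.restr i u)) :
    I.Q i u = (InnerProductSpace.toDual ℝ (Euc d)).symm
      ((fderiv ℝ (I.locF i u) (I.restr i u)).comp
        (.pi (Pi.single ⟨i, hi⟩ (.id ℝ (Euc d))))) := by
  have hcomp : (fun x => I.F i (Function.update u i x)) =
      I.locF i u ∘ Function.update (I.restr i u) ⟨i, hi⟩ :=
    funext fun x => congrArg (I.F i) (I.patch_update_restr hi u x).symm
  have hupd : Function.update (I.restr i u) ⟨i, hi⟩ (u i) = I.restr i u :=
    Function.update_eq_self _ _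
  have hd : HasFDerivAt (I.locF i u) (fderiv ℝ (I.locF i u) (I.restr i u))
      (Function.update (I.restr i u) ⟨i, hi⟩ (u i)) := by
    rw [hupd]
    exact hu.hasFDerivAt
  rw [Q, hcomp, gradient, (hd.comp (u i) (hasFDerivAt_update _ _)).fderiv]

lemma norm_Q_sub_le (hC2 : I.IsC2) {L : EuclideanSpace ℝ (Fin r) →ₗ[ℝ] Euc d} {R C : ℝ}
    (hC : ∀ u, OfTypeR L R u → ∀ i, ‖I.Q i u‖ + ‖I.HessF i u‖ ≤ C) {u v : Config r d}
    (hu : OfTypeR L R u) (hv : OfTypeR L R v) {M : ℝ} (hM : ∀ j, ‖u j - v j‖ ≤ M)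
    (i : ZLat r) : ‖I.Q i u - I.Q i v‖ ≤ C * M := by
  have hC0 : 0 ≤ C := (by positivity : 0 ≤ ‖I.Q i u‖ + ‖I.HessF i u‖).trans (hC u hu i)
  have hM0 : 0 ≤ M := (norm_nonneg _).trans (hM 0)
  rcases em' (i ∈ I.J i) with hi | hi
  · rw [I.Q_eq_zero_of_not_mem hi, I.Q_eq_zero_of_not_mem hi, sub_zero, norm_zero]
    positivity
  set D := fderiv ℝ (I.locF i u)
  have hD : Differentiable ℝ D :=
    ((hC2 i u).fderiv_right (m := 1) le_rfl).differentiable one_ne_zero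
  set Ω := univ.pi fun j : {j // j ∈ I.J i} => closedBall (L (latCast j.1)) R
  have hbound : ∀ w ∈ Ω, ‖fderiv ℝ D w‖ ≤ C := fun w hw => by
    have htype : OfTypeR L R (I.patch i u w) := fun j => by
      by_cases hj : j ∈ I.J i
      · simpa [patch, hj, dist_eq_norm] using hw ⟨j, hj⟩ (mem_univ _)
      · simpa [patch, hj] using hu j
    rw [← I.HessF_patch]
    linarith [hC _ htype i, norm_nonneg (I.Q i (I.patch i u w))]
  have hΩ : ∀ w : Config r d, OfTypeR L R w → I.restr i w ∈ Ω := fun w hw j _ => by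
    simpa [restr, dist_eq_norm] using hw j
  have hmv := (convex_pi fun j _ => convex_closedBall _ _).norm_image_sub_le_of_norm_fderiv_le
    (fun w _ => hD w) hbound (hΩ v hv) (hΩ u hu)
  have hres : ‖I.restr i u - I.restr i v‖ ≤ M := (pi_norm_le_iff_of_nonneg hM0).2 fun j => hM j
  have hdiff : ∀ w, DifferentiableAt ℝ (I.locF i u) w :=
    (hC2 i u).differentiable two_ne_zero
  rw [I.Q_eq_of_mem hi (hdiff _), I.Q_eq_of_mem hi (I.locF_eq i v u ▸ hdiff _), I.locF_eq i v u,
    ← map_sub, LinearIsometryEquiv.norm_map, ← ContinuousLinearMap.sub_comp]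
  calc _ ≤ ‖D (I.restr i u) - D (I.restr i v)‖ * 1 :=
        (ContinuousLinearMap.opNorm_comp_le _ _).trans
          (by gcongr; exact ContinuousLinearMap.norm_pi_single_id_le _)
    _ ≤ C * M := by
        rw [mul_one]
        exact hmv.trans (by gcongr)

end Interaction

lemma OfTypeR.of_forall_norm_sub_le {r d : ℕ} {L : EuclideanSpace ℝ (Fin r) →ₗ[ℝ] Euc d}
    {R ε : ℝ} {a u : Config r d} (ha : OfTypeR L R a) (hu : ∀ i, ‖u i - a i‖ ≤ ε) :
    OfTypeR L (R + ε) u := fun i => by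
  linarith [norm_sub_le_norm_sub_add_norm_sub (u i) (a i) (L (latCast i)), hu i, ha i]

theorem equilibrium_configurations_exist_general {d r : ℕ}
    (Λ : Set (Euc d)) (hFLC : HasFLC Λ)
    (V : Euc d → ℝ) (hV : BoundedC3 V) (hVeq : IsPatternEquivariant Λ V)
    (I : Interaction r d) (hC2 : I.IsC2) (hH2 : I.SatisfiesH2) :
    ∀ (L : EuclideanSpace ℝ (Fin r) →ₗ[ℝ] Euc d) (R : ℝ), 0 < R →
      ∃ lam₀ > (0 : ℝ), ∃ ε > (0 : ℝ), ∀ lam : ℝ, lam > lam₀ →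
        ∀ a : Config r d, (∀ i : ZLat r, a i ∈ ZSet V ∧ ‖a i - L (latCast i)‖ ≤ R) →
          (∃! u : Config r d,
            (∀ i : ZLat r, ‖u i - a i‖ ≤ ε) ∧
            (∀ i : ZLat r, I.Q i u + lam • gradient V (u i) = 0)) ∧
          (∀ u : Config r d,
            ((∀ i : ZLat r, ‖u i - a i‖ ≤ ε) ∧
             (∀ i : ZLat r, I.Q i u + lam • gradient V (u i) = 0)) →
            ∃ M : ℝ, ∀ i : ZLat r, ‖u i - L (latCast i)‖ ≤ M) := by
  intro L R hR
  obtain ⟨ε, hε, c, hc, hnewton⟩ :=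
    exists_uniform_newton_bound hFLC (hV.1.of_le (by norm_num)) hVeq
  obtain ⟨C, hC⟩ := hH2 L (R + ε) (by positivity)
  refine ⟨4 * c * |C| + 2 * c * |C| / ε + 1, by positivity, ε, hε, fun lam hlam a ha => ?_⟩
  have hnear : ∀ u : Config r d, (∀ j, ‖u j - a j‖ ≤ ε) → OfTypeR L (R + ε) u :=
    fun u hu => OfTypeR.of_forall_norm_sub_le (fun i => (ha i).2) hu
  have hcC : c * C ≤ c * |C| := mul_le_mul_of_nonneg_left (le_abs_self C) hc.le
  have hcC₀ : 0 ≤ c * |C| := by positivity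
  have hdiv : 0 ≤ 2 * c * |C| / ε := by positivity
  have hlam₁ : 2 * c * C ≤ lam * ε := by
    have := mul_le_mul_of_nonneg_right (show 2 * c * |C| / ε ≤ lam by linarith) hε.le
    rw [div_mul_cancel₀ _ hε.ne'] at this
    linarith
  refine ⟨existsUnique_add_smul_eq_zero (B := fun i => Ring.inverse (Hess V (a i))) hε.le
    (by linarith) (fun i => Function.LeftInverse.injective (g := Hess V (a i))
      (DFunLike.congr_fun (Ring.mul_inverse_cancel _ (ha i).1.2)))
    (fun i => (hnewton _ (ha i).1).1) (fun i => (ha i).1.1) (fun i => (hnewton _ (ha i).1).2)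
    (fun u hu i =>
      (le_add_of_nonneg_right (norm_nonneg (I.HessF i u))).trans (hC u (hnear u hu) i))
    (fun u v hu hv M hM i => I.norm_Q_sub_le hC2 hC (hnear u hu) (hnear v hv) hM i)
    hlam₁ (by linarith),
    fun u hu => ⟨R + ε, hnear u hu.1⟩⟩

/-- Theorem 1 (main): existence and uniqueness of equilibrium configurations of any type
for the magnified potential λV, coded by configurations in the non-degenerate zero set. -/
theorem equilibrium_configurations_exist {d r : ℕ}
    (Λ : Set (Euc d)) (hDel : IsDeloneSet Λ) (hRep : IsRepetitive Λ) (hFLC : HasFLC Λ)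
    (V : Euc d → ℝ) (hV : BoundedC3 V) (hVeq : IsPatternEquivariant Λ V)
    (hVnd : NonDegeneratePotential V)
    (I : Interaction r d) (hC2 : I.IsC2) (hH2 : I.SatisfiesH2) :
    ∀ (L : EuclideanSpace ℝ (Fin r) →ₗ[ℝ] Euc d) (R : ℝ), 0 < R →
      ∃ lam₀ > (0 : ℝ), ∃ ε > (0 : ℝ), ∀ lam : ℝ, lam > lam₀ →
        ∀ a : Config r d, (∀ i : ZLat r, a i ∈ ZSet V ∧ ‖a i - L (latCast i)‖ ≤ R) →
          (∃! u : Config r d,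
            (∀ i : ZLat r, ‖u i - a i‖ ≤ ε) ∧
            (∀ i : ZLat r, I.Q i u + lam • gradient V (u i) = 0)) ∧
          (∀ u : Config r d,
            ((∀ i : ZLat r, ‖u i - a i‖ ≤ ε) ∧
             (∀ i : ZLat r, I.Q i u + lam • gradient V (u i) = 0)) →
            ∃ M : ℝ, ∀ i : ZLat r, ‖u i - L (latCast i)‖ ≤ M) :=
  equilibrium_configurations_exist_general Λ hFLC V hV hVeq I hC2 hH2
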